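/- arXiv:2209.12796 — 2 statements merged into one kernel-verified Lean document; each statement's English description precedes it below -/
import Mathlib

section
/- Let A → B be an étale homomorphism of commutative rings. Then the kernel of the multiplication map m : B ⊗_A B → B, (x ⊗ y ↦ x*y), is generated as an ideal by a single idempotent element e of B ⊗_A B. Consequently B ⊗_A B is isomorphic as a ring to the product B × ker(m), where ker(m) is a ring whose identity is the idempotent e. -/
open TensorProduct

universe u

lemma etale_aux_mul_elem (A B : Type u) [CommRing A] [CommRing B] [Algebra A B]
    [Algebra.Etale A B] (z : B ⊗[A] B) :
    Algebra.FormallyUnramified.elem A B * ((Algebra.TensorProduct.lmul' A z) ⊗ₜ[A] (1 : B))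
      = Algebra.FormallyUnramified.elem A B * z := by
  induction z using TensorProduct.induction_on with
  | zero => simp
  | tmul x y =>
      have h := Algebra.FormallyUnramified.one_tmul_mul_elem (R := A) (S := B) y
      rw [Algebra.TensorProduct.lmul'_apply_tmul]
      have hx : (x * y) ⊗ₜ[A] (1 : B) = x ⊗ₜ[A] (1 : B) * y ⊗ₜ[A] (1 : B) := by
        rw [Algebra.TensorProduct.tmul_mul_tmul, mul_one]
      have hx2 : x ⊗ₜ[A] (1 : B) * (1 : B) ⊗ₜ[A] y = x ⊗ₜ[A] y := by
        rw [Algebra.TensorProduct.tmul_mul_tmul, mul_one, one_mul]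
      calc Algebra.FormallyUnramified.elem A B * (x * y) ⊗ₜ[A] (1 : B)
          = x ⊗ₜ[A] (1 : B) * (y ⊗ₜ[A] (1 : B) * Algebra.FormallyUnramified.elem A B) := by
            rw [hx]; ring
        _ = x ⊗ₜ[A] (1 : B) * ((1 : B) ⊗ₜ[A] y * Algebra.FormallyUnramified.elem A B) := by
            rw [h]
        _ = Algebra.FormallyUnramified.elem A B * x ⊗ₜ[A] y := by
            rw [← mul_assoc, hx2]; ring
  | add x y hx hy => rw [map_add, TensorProduct.add_tmul, mul_add, mul_add, hx, hy]

/-- For an étale homomorphism `A → B` of commutative rings, the kernel of the multiplication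
map `m : B ⊗_A B → B` is generated by a single idempotent element `e`, and consequently
`z ↦ (m z, e·z)` is a bijection (a ring isomorphism) of `B ⊗_A B` with `B × ker m`. -/
theorem etale_diagonal_idempotent (A B : Type u) [CommRing A] [CommRing B] [Algebra A B]
    [Algebra.Etale A B] :
    ∃ e : B ⊗[A] B, IsIdempotentElem e ∧
      ∃ hker : RingHom.ker (Algebra.TensorProduct.lmul' A : B ⊗[A] B →ₐ[A] B)
          = Ideal.span {e},
        Function.Bijective
          (fun z : B ⊗[A] B =>
            ((Algebra.TensorProduct.lmul' A z,
              ⟨e * z, Ideal.mul_mem_right z _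
                (hker.ge (Ideal.mem_span_singleton_self e))⟩) :
              B × ↥(RingHom.ker (Algebra.TensorProduct.lmul' A : B ⊗[A] B →ₐ[A] B)))) := by
  obtain ⟨t, ht⟩ : ∃ t, t = Algebra.FormallyUnramified.elem A B := ⟨_, rfl⟩
  have hmt : Algebra.TensorProduct.lmul' A t = 1 := by
    rw [ht]; exact Algebra.FormallyUnramified.lmul_elem (R := A) (S := B)
  have haux : ∀ z : B ⊗[A] B,
      t * ((Algebra.TensorProduct.lmul' A z) ⊗ₜ[A] (1 : B)) = t * z := by
    rw [ht]; exact etale_aux_mul_elem A B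
  have htt : t * t = t := by
    have := haux t
    rw [hmt, ← Algebra.TensorProduct.one_def, mul_one] at this
    exact this.symm
  have hee : IsIdempotentElem (1 - t) := by
    show (1 - t) * (1 - t) = 1 - t
    rw [sub_mul, one_mul, mul_sub, mul_one, htt]; ring
  have het : (1 - t) * t = 0 := by rw [sub_mul, one_mul, htt, sub_self]
  have hker : RingHom.ker (Algebra.TensorProduct.lmul' A : B ⊗[A] B →ₐ[A] B)
      = Ideal.span {1 - t} := by
    apply le_antisymm
    · show KaehlerDifferential.ideal A B ≤ Ideal.span {1 - t}
      rw [← KaehlerDifferential.span_range_eq_ideal, Ideal.span_le]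
      rintro _ ⟨s, rfl⟩
      rw [SetLike.mem_coe, Ideal.mem_span_singleton]
      refine ⟨(1 : B) ⊗ₜ[A] s - s ⊗ₜ[A] (1 : B), ?_⟩
      have h0 := Algebra.FormallyUnramified.one_tmul_sub_tmul_one_mul_elem (R := A) (S := B) s
      rw [← ht] at h0
      rw [mul_comm, mul_sub, mul_one, h0, sub_zero]
    · rw [Ideal.span_le, Set.singleton_subset_iff]
      simp only [SetLike.mem_coe, RingHom.mem_ker]
      rw [map_sub, map_one, hmt, sub_self]
  refine ⟨1 - t, hee, hker, ?_⟩
  have hek : ∀ k ∈ RingHom.ker (Algebra.TensorProduct.lmul' A : B ⊗[A] B →ₐ[A] B),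
      (1 - t) * k = k := by
    intro k hk
    rw [hker, Ideal.mem_span_singleton] at hk
    obtain ⟨u, rfl⟩ := hk
    rw [← mul_assoc, hee.eq]
  rw [Function.bijective_iff_has_inverse]
  refine ⟨fun p => t * (p.1 ⊗ₜ[A] 1) + (p.2 : B ⊗[A] B), ?_, ?_⟩
  · intro z
    simp only
    rw [haux z, sub_mul, one_mul, add_sub_cancel]
  · rintro ⟨b, k, hk⟩
    simp only [Prod.mk.injEq, Subtype.mk.injEq]
    rw [RingHom.mem_ker] at hk
    constructor
    · rw [map_add, map_mul, hmt, one_mul, Algebra.TensorProduct.lmul'_apply_tmul, mul_one,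
        hk, add_zero]
    · rw [mul_add, ← mul_assoc, het, zero_mul, zero_add, hek k hk]
end

section
/- Let A be a commutative ring in which 2 is invertible. Let T_A be the subgroup of A ⊗_ℤ A generated by all elements x ⊗ (a²y) − (a²x) ⊗ y and x ⊗ (2a y) − (2a x) ⊗ y for a, x, y ∈ A. Then the multiplication map A ⊗_ℤ A → A, x ⊗ y ↦ x*y, induces an isomorphism of abelian groups (A ⊗_ℤ A)/T_A ≅ A, with inverse x ↦ class of 1 ⊗ x. -/
open TensorProduct

theorem IsUnit.exists_sq_sub_sq_eq {A : Type*} [CommRing A] (h2 : IsUnit (2 : A)) (x : A) :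
    ∃ u v : A, u ^ 2 - v ^ 2 = x := by
  obtain ⟨c, hc⟩ := h2.exists_right_inv
  exact ⟨c * (x + 1), c * (x - 1), by linear_combination (2 * c + 1) * x * hc⟩

section

variable {R A : Type*} [CommRing R] [CommRing A] [Algebra R A]

theorem LinearMap.mul'_tmul_mul_sub_mul_tmul (a x y : A) :
    LinearMap.mul' R A (x ⊗ₜ[R] (a * y) - (a * x) ⊗ₜ[R] y) = 0 := by
  rw [map_sub, LinearMap.mul'_apply, LinearMap.mul'_apply]
  ring

/-- Since `x ↦ x ⊗ y - 1 ⊗ xy` is additive and every element is a difference of squares,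
it suffices to treat `x = a²`, which is a square relation. -/
theorem tmul_sub_one_tmul_mul_mem {T : AddSubgroup (A ⊗[R] A)} (h2 : IsUnit (2 : A))
    (hT : ∀ a y : A, (1 : A) ⊗ₜ[R] (a ^ 2 * y) - (a ^ 2) ⊗ₜ[R] y ∈ T) (x y : A) :
    x ⊗ₜ[R] y - (1 : A) ⊗ₜ[R] (x * y) ∈ T := by
  obtain ⟨u, v, rfl⟩ := h2.exists_sq_sub_sq_eq x
  have hsplit : (u ^ 2 - v ^ 2) ⊗ₜ[R] y - (1 : A) ⊗ₜ[R] ((u ^ 2 - v ^ 2) * y) =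
      ((1 : A) ⊗ₜ[R] (v ^ 2 * y) - (v ^ 2) ⊗ₜ[R] y) -
        ((1 : A) ⊗ₜ[R] (u ^ 2 * y) - (u ^ 2) ⊗ₜ[R] y) := by
    rw [sub_tmul, sub_mul, tmul_sub]
    abel
  rw [hsplit]
  exact sub_mem (hT v y) (hT u y)

theorem sub_one_tmul_mul'_mem {T : AddSubgroup (A ⊗[R] A)}
    (hT : ∀ x y : A, x ⊗ₜ[R] y - (1 : A) ⊗ₜ[R] (x * y) ∈ T) (z : A ⊗[R] A) :
    z - (1 : A) ⊗ₜ[R] LinearMap.mul' R A z ∈ T := by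
  induction z using TensorProduct.induction_on with
  | zero => simp
  | tmul x y => simpa only [LinearMap.mul'_apply] using hT x y
  | add z w hz hw =>
    rw [map_add, tmul_add, add_sub_add_comm]
    exact add_mem hz hw

end

/-- Let `A` be a commutative ring in which 2 is invertible, and `T_A ⊆ A ⊗_ℤ A` the
subgroup generated by the elements `x ⊗ (a²y) − (a²x) ⊗ y` and `x ⊗ (2ay) − (2ax) ⊗ y`.
Then multiplication induces an isomorphism of abelian groups `(A ⊗_ℤ A)/T_A ≅ A` with
inverse `x ↦ [1 ⊗ x]`. -/
theorem thr_pi0_two_invertible (A : Type*) [CommRing A] (h2 : IsUnit (2 : A))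
    (T : AddSubgroup (A ⊗[ℤ] A))
    (hT : T = AddSubgroup.closure
      {z : A ⊗[ℤ] A | ∃ a x y : A,
        z = x ⊗ₜ[ℤ] (a ^ 2 * y) - (a ^ 2 * x) ⊗ₜ[ℤ] y ∨
        z = x ⊗ₜ[ℤ] (2 * a * y) - (2 * a * x) ⊗ₜ[ℤ] y}) :
    ∃ g : (A ⊗[ℤ] A) ⧸ T →+ A,
      (∀ x y : A, g (QuotientAddGroup.mk (x ⊗ₜ[ℤ] y)) = x * y) ∧
      Function.LeftInverse g
        (fun x : A => (QuotientAddGroup.mk ((1 : A) ⊗ₜ[ℤ] x) : (A ⊗[ℤ] A) ⧸ T)) ∧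
      Function.RightInverse g
        (fun x : A => (QuotientAddGroup.mk ((1 : A) ⊗ₜ[ℤ] x) : (A ⊗[ℤ] A) ⧸ T)) := by
  set m : A ⊗[ℤ] A →+ A := (LinearMap.mul' ℤ A).toAddMonoidHom
  have hker : T ≤ m.ker := by
    rw [hT, AddSubgroup.closure_le]
    rintro _ ⟨a, x, y, rfl | rfl⟩ <;> exact LinearMap.mul'_tmul_mul_sub_mul_tmul _ _ _
  have hsq : ∀ a y : A, (1 : A) ⊗ₜ[ℤ] (a ^ 2 * y) - (a ^ 2) ⊗ₜ[ℤ] y ∈ T := fun a y => by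
    rw [hT]
    exact AddSubgroup.subset_closure ⟨a, 1, y, Or.inl (by rw [mul_one])⟩
  have hm : ∀ x y : A, m (x ⊗ₜ[ℤ] y) = x * y := fun _ _ => LinearMap.mul'_apply (R := ℤ)
  refine ⟨QuotientAddGroup.lift T m hker, hm,
    fun x => by simpa using hm 1 x, fun z => ?_⟩
  induction z using QuotientAddGroup.induction_on with
  | H t =>
    rw [QuotientAddGroup.lift_mk, QuotientAddGroup.eq, neg_add_eq_sub]
    exact sub_one_tmul_mul'_mem (tmul_sub_one_tmul_mul_mem h2 hsq) t
end
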